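/- arXiv:2012.14166 — 5 statements merged into one kernel-verified Lean document; each statement's English description precedes it below -/
import Mathlib

section
/- Let m ≥ 2 and let G and H be permutation groups on a finite set Ω that have the same orbits on Ω^m. Then for every point α ∈ Ω, the point stabilizers G_α and H_α have the same orbits on Ω^(m-1). -/
/-- Two subgroups of `Perm Ω` have the same orbits on `Ω^m` under the
componentwise action (`m`-equivalence). -/
def SameOrbits {Ω : Type*} (m : ℕ) (G H : Subgroup (Equiv.Perm Ω)) : Prop :=
  ∀ α β : Fin m → Ω,
    (∃ g ∈ G, ∀ i, g (α i) = β i) ↔ (∃ h ∈ H, ∀ i, h (α i) = β i)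

/-- The `m`-closure of `G`: the largest subgroup of `Perm Ω` having the same
orbits as `G` on `Ω^m`. -/
def mClosure {Ω : Type*} (m : ℕ) (G : Subgroup (Equiv.Perm Ω)) :
    Subgroup (Equiv.Perm Ω) :=
  sSup {H | SameOrbits m G H}

/-! An element of `G_α` maps the tuple `β` to `γ` exactly when an element of `G` maps
`(α, β)` to `(α, γ)`; so the orbits of `G_α` on `Ω^n` are read off the orbits of `G`
on `Ω^(n+1)`. -/

section

variable {Ω : Type*}

theorem sameOrbits_zero (G H : Subgroup (Equiv.Perm Ω)) : SameOrbits 0 G H :=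
  fun _ _ => ⟨fun _ => ⟨1, H.one_mem, nofun⟩, fun _ => ⟨1, G.one_mem, nofun⟩⟩

theorem exists_mem_inf_stabilizer_iff_cons {n : ℕ} (G : Subgroup (Equiv.Perm Ω)) (α : Ω)
    (β γ : Fin n → Ω) :
    (∃ g ∈ G ⊓ MulAction.stabilizer (Equiv.Perm Ω) α, ∀ i, g (β i) = γ i) ↔
      ∃ g ∈ G, ∀ i,
        g ((Fin.cons α β : Fin (n + 1) → Ω) i) = (Fin.cons α γ : Fin (n + 1) → Ω) i := by
  simp only [Fin.forall_fin_succ, Fin.cons_zero, Fin.cons_succ, Subgroup.mem_inf,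
    MulAction.mem_stabilizer_iff, Equiv.Perm.smul_def, and_assoc]

theorem SameOrbits.inf_stabilizer {n : ℕ} {G H : Subgroup (Equiv.Perm Ω)}
    (h : SameOrbits (n + 1) G H) (α : Ω) :
    SameOrbits n (G ⊓ MulAction.stabilizer (Equiv.Perm Ω) α)
      (H ⊓ MulAction.stabilizer (Equiv.Perm Ω) α) := fun β γ => by
  rw [exists_mem_inf_stabilizer_iff_cons, exists_mem_inf_stabilizer_iff_cons, h]

end

theorem stmt2_general {Ω : Type*} (m : ℕ)
    (G H : Subgroup (Equiv.Perm Ω)) (h : SameOrbits m G H) (α : Ω) :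
    SameOrbits (m - 1) (G ⊓ MulAction.stabilizer (Equiv.Perm Ω) α)
      (H ⊓ MulAction.stabilizer (Equiv.Perm Ω) α) := by
  cases m with
  | zero => exact sameOrbits_zero _ _
  | succ n => exact h.inf_stabilizer α

theorem stmt2 {Ω : Type*} [Fintype Ω] (m : ℕ) (hm : 2 ≤ m)
    (G H : Subgroup (Equiv.Perm Ω)) (h : SameOrbits m G H) (α : Ω) :
    SameOrbits (m - 1) (G ⊓ MulAction.stabilizer (Equiv.Perm Ω) α)
      (H ⊓ MulAction.stabilizer (Equiv.Perm Ω) α) :=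
  stmt2_general m G H h α
end

section
/- Let m ≥ 2 and let G be a permutation group on a finite set Ω. If some point stabilizer G_α is (m-1)-closed (i.e., (G_α)^(m-1) = G_α as permutation groups on Ω), then G is m-closed, i.e., G^(m) = G. -/
/-! The `m`-closure of `G` is the group of permutations mapping every `m`-tuple into its `G`-orbit.
Write `m = k + 1` and let `h` lie in the `m`-closure of `G`. Matching the `m`-tuple
`(α, x₁, …, x_k)` against its image under `h` yields elements of `G` that agree with `h` at `α`
and on the `xᵢ`; composing with the inverse of one fixed `g₀ ∈ G` with `g₀ α = h α` shows that
`g₀⁻¹ h` lies in the `k`-closure of `G_α`. That closure is `G_α ≤ G`, so `h ∈ G`. -/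

open Equiv MulAction

section OrbitPreserving

variable {Ω : Type*}

def orbitPreserving (m : ℕ) (G : Subgroup (Perm Ω)) : Subgroup (Perm Ω) where
  carrier := {h | ∀ x : Fin m → Ω, ∃ g ∈ G, ∀ i, g (x i) = h (x i)}
  one_mem' x := ⟨1, G.one_mem, fun _ => rfl⟩
  mul_mem' {a b} ha hb x := by
    obtain ⟨gb, hgb, hbx⟩ := hb x
    obtain ⟨ga, hga, hax⟩ := ha fun i => b (x i)
    exact ⟨ga * gb, G.mul_mem hga hgb, fun i => by simp [Perm.mul_apply, hbx i, hax i]⟩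
  inv_mem' {a} ha x := by
    obtain ⟨g, hg, hgx⟩ := ha fun i => a⁻¹ (x i)
    refine ⟨g⁻¹, G.inv_mem hg, fun i => ?_⟩
    rw [Perm.inv_eq_iff_eq, hgx i]
    exact (a.apply_symm_apply _).symm

variable {m : ℕ} {G : Subgroup (Perm Ω)}

theorem le_orbitPreserving : G ≤ orbitPreserving m G :=
  fun g hg _ => ⟨g, hg, fun _ => rfl⟩

theorem sameOrbits_orbitPreserving : SameOrbits m G (orbitPreserving m G) := by
  intro x y
  refine ⟨fun ⟨g, hg, hgx⟩ => ⟨g, le_orbitPreserving hg, hgx⟩, fun ⟨h, hh, hhx⟩ => ?_⟩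
  obtain ⟨g, hg, hgx⟩ := hh x
  exact ⟨g, hg, fun i => (hgx i).trans (hhx i)⟩

theorem SameOrbits.le_orbitPreserving {H : Subgroup (Perm Ω)} (hH : SameOrbits m G H) :
    H ≤ orbitPreserving m G :=
  fun h hh x => (hH x fun i => h (x i)).mpr ⟨h, hh, fun _ => rfl⟩

theorem mClosure_eq_orbitPreserving : mClosure m G = orbitPreserving m G :=
  le_antisymm (sSup_le fun _ hH => SameOrbits.le_orbitPreserving hH)
    (le_sSup sameOrbits_orbitPreserving)

theorem exists_mem_apply_eq_of_mem_orbitPreserving {k : ℕ} {h : Perm Ω}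
    (hh : h ∈ orbitPreserving (k + 1) G) (α : Ω) : ∃ g ∈ G, g α = h α := by
  obtain ⟨g, hg, hgα⟩ := hh fun _ => α
  exact ⟨g, hg, hgα 0⟩

theorem inv_mul_mem_orbitPreserving_stabilizer {k : ℕ} {α : Ω} {g₀ h : Perm Ω}
    (hh : h ∈ orbitPreserving (k + 1) G) (hg₀ : g₀ ∈ G) (hg₀α : g₀ α = h α) :
    g₀⁻¹ * h ∈ orbitPreserving k (G ⊓ stabilizer (Perm Ω) α) := by
  intro x
  obtain ⟨g, hg, hgx⟩ := hh (Fin.cons α x)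
  have hgα : g α = h α := by simpa using hgx 0
  refine ⟨g₀⁻¹ * g, ⟨G.mul_mem (G.inv_mem hg₀) hg, ?_⟩, fun i => ?_⟩
  · change g₀⁻¹ (g α) = α
    rw [hgα, ← hg₀α]
    exact g₀.symm_apply_apply α
  · simpa [Perm.mul_apply] using congrArg (⇑g₀⁻¹) (hgx i.succ)

end OrbitPreserving

theorem stmt5_general {Ω : Type*} (m : ℕ) (hm : 2 ≤ m)
    (G : Subgroup (Equiv.Perm Ω)) (α : Ω)
    (hstab : mClosure (m - 1) (G ⊓ MulAction.stabilizer (Equiv.Perm Ω) α) =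
      G ⊓ MulAction.stabilizer (Equiv.Perm Ω) α) :
    mClosure m G = G := by
  obtain ⟨k, rfl⟩ : ∃ k, m = k + 1 := ⟨m - 1, by omega⟩
  rw [Nat.add_sub_cancel, mClosure_eq_orbitPreserving] at hstab
  rw [mClosure_eq_orbitPreserving]
  refine le_antisymm (fun h hh => ?_) le_orbitPreserving
  obtain ⟨g₀, hg₀, hg₀α⟩ := exists_mem_apply_eq_of_mem_orbitPreserving hh α
  have hstab_mem : g₀⁻¹ * h ∈ G ⊓ stabilizer (Perm Ω) α :=
    hstab ▸ inv_mul_mem_orbitPreserving_stabilizer hh hg₀ hg₀α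
  simpa using G.mul_mem hg₀ hstab_mem.1

theorem stmt5 {Ω : Type*} [Fintype Ω] (m : ℕ) (hm : 2 ≤ m)
    (G : Subgroup (Equiv.Perm Ω)) (α : Ω)
    (hstab : mClosure (m - 1) (G ⊓ MulAction.stabilizer (Equiv.Perm Ω) α) =
      G ⊓ MulAction.stabilizer (Equiv.Perm Ω) α) :
    mClosure m G = G :=
  stmt5_general m hm G α hstab
end

section
/- Let m ≥ 2 and let G be a permutation group on a finite set Ω. If some (m-1)-point stabilizer of G (the pointwise stabilizer of some m-1 points) has a faithful regular orbit on Ω, then G is (m+1)-closed. -/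
section

variable {Ω : Type*}

theorem SameOrbits.refl (m : ℕ) (G : Subgroup (Equiv.Perm Ω)) : SameOrbits m G G :=
  fun _ _ => Iff.rfl

theorem le_mClosure (m : ℕ) (G : Subgroup (Equiv.Perm Ω)) : G ≤ mClosure m G :=
  le_sSup (SameOrbits.refl m G)

theorem mClosure_eq_self_of_forall_sameOrbits_le {m : ℕ} {G : Subgroup (Equiv.Perm Ω)}
    (h : ∀ H, SameOrbits m G H → H ≤ G) : mClosure m G = G :=
  le_antisymm (sSup_le h) (le_mClosure m G)

theorem SameOrbits.exists_mem_eqOn_snoc {k : ℕ} {G H : Subgroup (Equiv.Perm Ω)}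
    (hGH : SameOrbits (k + 1) G H) (γ : Fin k → Ω) {h : Equiv.Perm Ω} (hh : h ∈ H) (ω : Ω) :
    ∃ g ∈ G, (∀ i, g (γ i) = h (γ i)) ∧ g ω = h ω := by
  let t : Fin (k + 1) → Ω := Fin.snoc γ ω
  obtain ⟨g, hg, hgh⟩ := (hGH t (fun i => h (t i))).mpr ⟨h, hh, fun _ => rfl⟩
  refine ⟨g, hg, fun i => ?_, ?_⟩
  · simpa only [t, Fin.snoc_castSucc] using hgh i.castSucc
  · simpa only [t, Fin.snoc_last] using hgh (Fin.last k)

theorem eq_of_eqOn_of_fixing_eq_one {k : ℕ} {G : Subgroup (Equiv.Perm Ω)} {γ : Fin k → Ω}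
    (hγ : ∀ g ∈ G, (∀ i, g (γ i) = γ i) → g = 1) {g₁ g₂ : Equiv.Perm Ω}
    (hg₁ : g₁ ∈ G) (hg₂ : g₂ ∈ G) (h : ∀ i, g₁ (γ i) = g₂ (γ i)) : g₁ = g₂ := by
  have hfix : ∀ i, (g₁⁻¹ * g₂) (γ i) = γ i := fun i => by
    rw [Equiv.Perm.mul_apply, ← h i, Equiv.Perm.coe_inv, Equiv.symm_apply_apply]
  exact (inv_mul_eq_one.mp (hγ _ (mul_mem (inv_mem hg₁) hg₂) hfix))

theorem SameOrbits.le_of_fixing_eq_one {k : ℕ} {G H : Subgroup (Equiv.Perm Ω)}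
    (hGH : SameOrbits (k + 1) G H) (γ : Fin k → Ω)
    (hγ : ∀ g ∈ G, (∀ i, g (γ i) = γ i) → g = 1) : H ≤ G := by
  intro h hh
  rcases isEmpty_or_nonempty Ω with _ | ⟨⟨ω₀⟩⟩
  · exact Subsingleton.elim h 1 ▸ one_mem G
  choose g hgG hgγ hgω using hGH.exists_mem_eqOn_snoc γ hh
  have hg : ∀ ω, g ω = g ω₀ := fun ω =>
    eq_of_eqOn_of_fixing_eq_one hγ (hgG ω) (hgG ω₀) fun i => (hgγ ω i).trans (hgγ ω₀ i).symm
  have : h = g ω₀ := Equiv.ext fun ω => by rw [← hgω ω, hg ω]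
  exact this ▸ hgG ω₀

theorem mClosure_succ_eq_self_of_fixing_eq_one {k : ℕ} {G : Subgroup (Equiv.Perm Ω)}
    (γ : Fin k → Ω) (hγ : ∀ g ∈ G, (∀ i, g (γ i) = γ i) → g = 1) :
    mClosure (k + 1) G = G :=
  mClosure_eq_self_of_forall_sameOrbits_le fun _ hGH => hGH.le_of_fixing_eq_one γ hγ

end

theorem stmt6_general {Ω : Type*} (m : ℕ) (hm : 2 ≤ m)
    (G : Subgroup (Equiv.Perm Ω)) (β : Fin (m - 1) → Ω)
    -- the pointwise stabilizer of the points `β 0, …, β (m-2)` has a faithful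
    -- regular orbit: some point has trivial stabilizer in it
    (hreg : ∃ α : Ω,
      ∀ g ∈ G ⊓ ⨅ i, MulAction.stabilizer (Equiv.Perm Ω) (β i),
        g α = α → g = 1) :
    mClosure (m + 1) G = G := by
  obtain ⟨α, hα⟩ := hreg
  set γ : Fin (m - 1 + 1) → Ω := Fin.snoc β α
  have hγ : ∀ g ∈ G, (∀ i, g (γ i) = γ i) → g = 1 := by
    intro g hg hfix
    refine hα g (Subgroup.mem_inf.mpr ⟨hg, Subgroup.mem_iInf.mpr fun i => ?_⟩) ?_
    · simpa only [MulAction.mem_stabilizer_iff, Equiv.Perm.smul_def, γ, Fin.snoc_castSucc]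
        using hfix i.castSucc
    · simpa only [γ, Fin.snoc_last] using hfix (Fin.last _)
  have := mClosure_succ_eq_self_of_fixing_eq_one γ hγ
  rwa [Nat.sub_add_cancel (by omega : 1 ≤ m)] at this

theorem stmt6 {Ω : Type*} [Fintype Ω] (m : ℕ) (hm : 2 ≤ m)
    (G : Subgroup (Equiv.Perm Ω)) (β : Fin (m - 1) → Ω)
    -- the pointwise stabilizer of the points `β 0, …, β (m-2)` has a faithful
    -- regular orbit: some point has trivial stabilizer in it
    (hreg : ∃ α : Ω,
      ∀ g ∈ G ⊓ ⨅ i, MulAction.stabilizer (Equiv.Perm Ω) (β i),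
        g α = α → g = 1) :
    mClosure (m + 1) G = G :=
  stmt6_general m hm G β hreg
end

section
/- Every element of the 2-closure of the wreath product Sym(Γ) ↑ Sym(Δ) in product action on Γ^Δ is itself an element of Sym(Γ) ↑ Sym(Δ); that is, Sym(Γ) wr Sym(Δ) in product action is 2-closed (for |Γ| ≥ 3). -/
open Function Equiv

namespace HammingGraph

variable {Γ Δ : Type*}

def AdjAlong (x y : Δ → Γ) (δ : Δ) : Prop := x δ ≠ y δ ∧ ∀ ε, ε ≠ δ → x ε = y ε

namespace AdjAlong

variable {x y z w : Δ → Γ} {α β γ η δ ε : Δ}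

lemma symm (h : AdjAlong x y δ) : AdjAlong y x δ :=
  ⟨h.1.symm, fun ε hε => (h.2 ε hε).symm⟩

lemma unique (h : AdjAlong x y δ) (h' : AdjAlong x y ε) : δ = ε := by
  by_contra hne
  exact h.1 (h'.2 δ hne)

lemma eq_or_adjAlong_of_eqOn (h : ∀ ε, ε ≠ δ → x ε = y ε) : x = y ∨ AdjAlong x y δ := by
  by_cases hδ : x δ = y δ
  · left
    funext ε
    by_cases hε : ε = δ
    · exact hε ▸ hδ
    · exact h ε hε
  · exact Or.inr ⟨hδ, h⟩

lemma of_same_direction (hxy : AdjAlong x y ε) (hxz : AdjAlong x z ε) (hyz : y ≠ z) :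
    AdjAlong y z ε :=
  (eq_or_adjAlong_of_eqOn fun i hi => (hxy.2 i hi).symm.trans (hxz.2 i hi)).resolve_left hyz

lemma eq_of_triangle (hxy : AdjAlong x y α) (hxz : AdjAlong x z β) (hyz : AdjAlong y z γ) :
    α = β := by
  by_contra hαβ
  have hγα : γ = α := by
    by_contra h
    exact hxy.1 ((hxz.2 α hαβ).trans (hyz.2 α (Ne.symm h)).symm)
  have hγβ : γ = β := by
    by_contra h
    exact hxz.1 ((hxy.2 β (Ne.symm hαβ)).trans (hyz.2 β (Ne.symm h)))
  exact hαβ (hγα.symm.trans hγβ)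

end AdjAlong

section Fintype

variable [Fintype Δ] [DecidableEq Γ] {x y z w : Δ → Γ} {α β γ η : Δ}

lemma hammingDist_eq_one_iff : hammingDist x y = 1 ↔ ∃ δ, AdjAlong x y δ := by
  simp only [hammingDist, Finset.card_eq_one, Finset.eq_singleton_iff_unique_mem,
    Finset.mem_filter, Finset.mem_univ, true_and, AdjAlong]
  refine exists_congr fun δ => and_congr_right fun _ => forall_congr' fun ε => ?_
  exact not_imp_comm

lemma ne_and_ne_of_two_le_hammingDist (hxw : 2 ≤ hammingDist x w)
    (h : ∀ ε, ε ≠ α → ε ≠ β → x ε = w ε) : α ≠ β ∧ x α ≠ w α ∧ x β ≠ w β := by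
  classical
  have hsub : ({i | x i ≠ w i} : Finset Δ) ⊆ {α, β} := by
    intro i hi
    by_contra hi'
    simp only [Finset.mem_insert, Finset.mem_singleton, not_or] at hi'
    exact (Finset.mem_filter.1 hi).2 (h i hi'.1 hi'.2)
  have hpair : ({i | x i ≠ w i} : Finset Δ) = {α, β} :=
    Finset.eq_of_subset_of_card_le hsub (Finset.card_le_two.trans hxw)
  have hmem : α ∈ ({i | x i ≠ w i} : Finset Δ) ∧ β ∈ ({i | x i ≠ w i} : Finset Δ) := by
    simp [hpair]
  refine ⟨Finset.card_pair_eq_two_iff.1 (le_antisymm Finset.card_le_two ?_), by simpa using hmem⟩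
  rwa [← hpair]

/-- Opposite sides of a non-degenerate 4-cycle `x - y - w - z - x` point in the same direction. -/
lemma AdjAlong.eq_of_square (hxy : AdjAlong x y α) (hyw : AdjAlong y w β) (hxz : AdjAlong x z γ)
    (hzw : AdjAlong z w η) (hxw : 2 ≤ hammingDist x w) (hyz : y ≠ z) : β = γ := by
  obtain ⟨hαβ, hα, hβ⟩ := ne_and_ne_of_two_le_hammingDist hxw fun ε h₁ h₂ =>
    (hxy.2 ε h₁).trans (hyw.2 ε h₂)
  have hxw' : ∀ ε, ε ≠ γ → ε ≠ η → x ε = w ε := fun ε h₁ h₂ => (hxz.2 ε h₁).trans (hzw.2 ε h₂)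
  by_contra hβγ
  have hβη : β = η := by
    by_contra h
    exact hβ (hxw' β hβγ h)
  have hαγ : α = γ := by
    by_contra h
    exact hα (hxw' α h (hβη ▸ hαβ))
  refine hyz (funext fun i => ?_)
  by_cases hi : i = α
  · subst hi
    exact (hyw.2 i hαβ).trans (hzw.2 i (hβη ▸ hαβ)).symm
  · exact (hxy.2 i hi).symm.trans (hxz.2 i (hαγ ▸ hi))

lemma hammingDist_comp_equiv {ι : Type*} [Fintype ι] (e : ι ≃ Δ) (x y : Δ → Γ) :
    hammingDist (x ∘ e) (y ∘ e) = hammingDist x y :=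
  Finset.card_equiv e (by simp)

lemma hammingDist_productAction (k : Δ → Perm Γ) (l : Perm Δ) (x y : Δ → Γ) :
    hammingDist (fun δ => k δ (x (l⁻¹ δ))) (fun δ => k δ (y (l⁻¹ δ))) = hammingDist x y := by
  rw [hammingDist_comp (fun δ => k δ) (fun δ => (k δ).injective)]
  exact hammingDist_comp_equiv (l⁻¹ : Perm Δ) x y

lemma injective_of_hammingDist_eq {f : (Δ → Γ) → Δ → Γ}
    (hf : ∀ x y, hammingDist (f x) (f y) = hammingDist x y) : Injective f := fun x y h =>
  hammingDist_eq_zero.1 (by rw [← hf, h, hammingDist_self])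

lemma exists_adjAlong_apply {f : (Δ → Γ) → Δ → Γ}
    (hf : ∀ x y, hammingDist (f x) (f y) = hammingDist x y) {x y : Δ → Γ} {δ : Δ}
    (h : AdjAlong x y δ) : ∃ ε, AdjAlong (f x) (f y) ε := by
  rw [← hammingDist_eq_one_iff, hf, hammingDist_eq_one_iff]
  exact ⟨δ, h⟩

lemma exists_adjAlong_of_adjAlong_apply {f : (Δ → Γ) → Δ → Γ}
    (hf : ∀ x y, hammingDist (f x) (f y) = hammingDist x y) {x y : Δ → Γ} {ε : Δ}
    (h : AdjAlong (f x) (f y) ε) : ∃ δ, AdjAlong x y δ := by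
  rw [← hammingDist_eq_one_iff, ← hf, hammingDist_eq_one_iff]
  exact ⟨ε, h⟩

lemma two_le_hammingDist_update_update [DecidableEq Δ] {x : Δ → Γ} {δ δ' : Δ} {c a : Γ}
    (hδ : δ ≠ δ') (hc : c ≠ x δ) (ha : a ≠ x δ') :
    2 ≤ hammingDist x (update (update x δ c) δ' a) := by
  calc 2 = ({δ, δ'} : Finset Δ).card := (Finset.card_pair hδ).symm
    _ ≤ hammingDist x (update (update x δ c) δ' a) := by
      refine Finset.card_le_card fun i hi => ?_
      rcases Finset.mem_insert.1 hi with rfl | hi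
      · simpa [hδ] using hc.symm
      · rw [Finset.mem_singleton.1 hi]
        simpa using ha.symm

end Fintype

lemma adjAlong_update [DecidableEq Δ] {x : Δ → Γ} {δ : Δ} {c : Γ} (hc : c ≠ x δ) :
    AdjAlong x (update x δ c) δ :=
  ⟨by simpa using hc.symm, fun _ hε => (update_of_ne hε c x).symm⟩

lemma apply_update_of_ne [DecidableEq Δ] {f : (Δ → Γ) → Δ → Γ} {x : Δ → Γ} {δ ε ε' : Δ}
    (h : ∀ c, c ≠ x δ → AdjAlong (f x) (f (update x δ c)) ε) (c : Γ) (hε' : ε' ≠ ε) :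
    f (update x δ c) ε' = f x ε' := by
  rcases eq_or_ne c (x δ) with rfl | hc
  · rw [update_eq_self]
  · exact ((h c hc).2 ε' hε').symm

lemma induction_on_update [Finite Δ] [DecidableEq Δ] {P : (Δ → Γ) → Prop} (x₀ : Δ → Γ)
    (h₀ : P x₀) (hstep : ∀ x δ c, P x → P (update x δ c)) (x : Δ → Γ) : P x := by
  have := Fintype.ofFinite Δ
  suffices ∀ s : Finset Δ, ∀ x : Δ → Γ, (∀ δ ∉ s, x δ = x₀ δ) → P x from
    this Finset.univ x (by simp)
  intro s
  induction s using Finset.induction_on with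
  | empty =>
    intro x hx
    rwa [show x = x₀ from funext fun δ => hx δ (Finset.notMem_empty δ)]
  | insert a s _ ih =>
    intro x hx
    rw [← update_eq_self a x, ← update_idem (x₀ a)]
    refine hstep _ a _ (ih _ fun δ hδ => ?_)
    by_cases hδa : δ = a
    · simp [hδa]
    · rw [update_of_ne hδa]
      exact hx δ (by simp [hδa, hδ])

section Isometry

variable [Fintype Δ] [DecidableEq Δ] [DecidableEq Γ] {f : (Δ → Γ) → Δ → Γ}
  (hf : ∀ x y, hammingDist (f x) (f y) = hammingDist x y)
include hf

lemma exists_direction [Nontrivial Γ] (x : Δ → Γ) (δ : Δ) :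
    ∃ ε, ∀ c, c ≠ x δ → AdjAlong (f x) (f (update x δ c)) ε := by
  obtain ⟨c₀, hc₀⟩ := exists_ne (x δ)
  obtain ⟨ε, hε⟩ := exists_adjAlong_apply hf (adjAlong_update hc₀)
  refine ⟨ε, fun c hc => ?_⟩
  obtain ⟨ε', hε'⟩ := exists_adjAlong_apply hf (adjAlong_update hc)
  rcases eq_or_ne c c₀ with rfl | hcc₀
  · exact hε
  · have hline : AdjAlong (update x δ c₀) (update x δ c) δ := by
      simpa using adjAlong_update (x := update x δ c₀) (δ := δ) (c := c) (by simpa using hcc₀)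
    obtain ⟨γ, hγ⟩ := exists_adjAlong_apply hf hline
    rwa [hε.eq_of_triangle hε' hγ]

variable {σ : (Δ → Γ) → Δ → Δ}
  (hσ : ∀ x δ c, c ≠ x δ → AdjAlong (f x) (f (update x δ c)) (σ x δ))
include hσ

lemma direction_injective [Nontrivial Γ] (x : Δ → Γ) : Injective (σ x) := by
  intro δ δ' h
  by_contra hne
  obtain ⟨c, hc⟩ := exists_ne (x δ)
  obtain ⟨c', hc'⟩ := exists_ne (x δ')
  have hyz : update x δ c ≠ update x δ' c' := fun h' => hc (by simpa [hne] using congrFun h' δ)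
  obtain ⟨η, hη⟩ := exists_adjAlong_of_adjAlong_apply hf <|
    (hσ x δ c hc).of_same_direction (h ▸ hσ x δ' c' hc') ((injective_of_hammingDist_eq hf).ne hyz)
  exact hne ((adjAlong_update hc).eq_of_triangle (adjAlong_update hc') hη)

lemma direction_update [Nontrivial Γ] (x : Δ → Γ) (δ : Δ) (c : Γ) :
    σ (update x δ c) = σ x := by
  rcases eq_or_ne c (x δ) with rfl | hc
  · rw [update_eq_self]
  funext δ'
  rcases eq_or_ne δ' δ with rfl | hδ'
  · have hyx : AdjAlong (f (update x δ' c)) (f x) (σ (update x δ' c) δ') := by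
      simpa using hσ (update x δ' c) δ' (x δ') (by simpa using hc.symm)
    exact hyx.unique (hσ x δ' c hc).symm
  · obtain ⟨a, ha⟩ := exists_ne (x δ')
    have hzw : update (update x δ c) δ' a = update (update x δ' a) δ c :=
      update_comm hδ'.symm _ _ _
    obtain ⟨η, hη⟩ := exists_adjAlong_apply hf
      (hzw ▸ adjAlong_update (x := update x δ' a) (by simpa [hδ'.symm] using hc))
    refine (hσ x δ c hc).eq_of_square (hσ _ δ' a (by simpa [hδ'] using ha)) (hσ x δ' a ha) hη
      ?_ ?_
    · rw [hf]
      exact two_le_hammingDist_update_update hδ'.symm hc ha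
    · refine (injective_of_hammingDist_eq hf).ne fun h => hc ?_
      simpa [hδ'.symm] using congrFun h δ

lemma direction_eq [Nontrivial Γ] (x y : Δ → Γ) : σ x = σ y :=
  induction_on_update (P := fun z => σ z = σ y) y rfl
    (fun z δ c h => (direction_update hf hσ z δ c).trans h) x

lemma apply_direction_eq [Nontrivial Γ] (x₀ x : Δ → Γ) (δ : Δ) :
    f x (σ x₀ δ) = f (update x₀ δ (x δ)) (σ x₀ δ) := by
  suffices ∀ c, f (update x δ c) (σ x₀ δ) = f (update x₀ δ c) (σ x₀ δ) by
    simpa using this (x δ)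
  refine induction_on_update
    (P := fun x => ∀ c, f (update x δ c) (σ x₀ δ) = f (update x₀ δ c) (σ x₀ δ)) x₀
    (fun _ => rfl) (fun y δ' a hy c => ?_) x
  rcases eq_or_ne δ' δ with rfl | hne
  · rw [update_idem]
    exact hy c
  · rw [update_comm hne, apply_update_of_ne (hσ (update y δ c) δ'), hy]
    rw [direction_eq hf hσ (update y δ c) x₀]
    exact (direction_injective hf hσ x₀).ne hne.symm

end Isometry

lemma exists_perm_of_hammingDist_eq [Fintype Δ] [DecidableEq Δ] [DecidableEq Γ] [Finite Γ]
    [Nontrivial Γ] {f : (Δ → Γ) → Δ → Γ}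
    (hf : ∀ x y, hammingDist (f x) (f y) = hammingDist x y) :
    ∃ (k : Δ → Perm Γ) (l : Perm Δ), ∀ (x : Δ → Γ) (δ : Δ), f x δ = k δ (x (l⁻¹ δ)) := by
  choose σ hσ using exists_direction hf
  obtain ⟨x₀⟩ : Nonempty (Δ → Γ) := inferInstance
  let l : Perm Δ :=
    Equiv.ofBijective (σ x₀) (Finite.injective_iff_bijective.1 (direction_injective hf hσ x₀))
  have hk : ∀ δ, Injective fun c => f (update x₀ δ c) (σ x₀ δ) := by
    intro δ c c' h
    refine update_injective x₀ δ (injective_of_hammingDist_eq hf (funext fun ε => ?_))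
    rcases eq_or_ne ε (σ x₀ δ) with rfl | hε
    · exact h
    · rw [apply_update_of_ne (hσ x₀ δ) c hε, apply_update_of_ne (hσ x₀ δ) c' hε]
  refine ⟨fun δ => Equiv.ofBijective _ (Finite.injective_iff_bijective.1 (hk (l⁻¹ δ))), l,
    fun x δ => ?_⟩
  obtain ⟨δ, rfl⟩ := l.surjective δ
  simp only [Perm.inv_def, symm_apply_apply, Equiv.ofBijective_apply]
  exact apply_direction_eq hf hσ x₀ x δ

end HammingGraph

lemma SameOrbits.exists_mem_apply_eq {Ω : Type*} {G H : Subgroup (Perm Ω)}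
    (hGH : SameOrbits 2 G H) {h : Perm Ω} (hh : h ∈ H) (x y : Ω) :
    ∃ g ∈ G, g x = h x ∧ g y = h y := by
  obtain ⟨g, hg, hgi⟩ := (hGH ![x, y] ![h x, h y]).2 ⟨h, hh, fun i => by fin_cases i <;> rfl⟩
  exact ⟨g, hg, hgi 0, hgi 1⟩

/-- The wreath product `Sym(Γ) ↑ Sym(Δ)` in product action on `Γ^Δ` is
2-closed when `|Γ| ≥ 3`: here `W` is the subgroup of `Sym(Γ^Δ)` consisting of
the product-action permutations `x ↦ (δ ↦ k δ (x (l⁻¹ δ)))`. -/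
theorem stmt14 {Γ Δ : Type*} [Fintype Γ] [Fintype Δ]
    (hΓ : 3 ≤ Fintype.card Γ)
    (W : Subgroup (Equiv.Perm (Δ → Γ)))
    (hW : ∀ f : Equiv.Perm (Δ → Γ), f ∈ W ↔
      ∃ (k : Δ → Equiv.Perm Γ) (l : Equiv.Perm Δ),
        ∀ (x : Δ → Γ) (δ : Δ), f x δ = k δ (x (l⁻¹ δ))) :
    mClosure 2 W = W := by
  classical
  have : Nontrivial Γ := Fintype.one_lt_card_iff_nontrivial.1 (by omega)
  refine le_antisymm (sSup_le fun H hH h hh => ?_) (le_sSup fun _ _ => Iff.rfl)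
  refine (hW h).2 (HammingGraph.exists_perm_of_hammingDist_eq fun x y => ?_)
  obtain ⟨g, hg, hgx, hgy⟩ := SameOrbits.exists_mem_apply_eq hH hh x y
  obtain ⟨k, l, hkl⟩ := (hW g).1 hg
  rw [← hgx, ← hgy, funext (hkl x), funext (hkl y), HammingGraph.hammingDist_productAction]
end

section
/- Let K ≤ Sym(Γ) and L ≤ Sym(Δ) be such that the wreath product K ↑ L in product action on Γ^Δ is primitive (equivalently, K is primitive and nonregular, and L is transitive and nontrivial). Then (K ↑ L)^(3) ≤ K^(3) ↑ L^(3), where closures are taken of K on Γ, of L on Δ, and of K ↑ L on Γ^Δ. -/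
open Equiv Function Set

theorem apply_eq_of_image_pair_eq {α β : Type*} {f g : α → β} (hf : Injective f)
    (hg : Injective g) {a b c : α} (hab : f '' {a, b} = g '' {a, b})
    (hac : f '' {a, c} = g '' {a, c}) (hbc : b ≠ c) : f a = g a := by
  have hinter : ({a, b} ∩ {a, c} : Set α) = {a} := by
    ext; aesop
  have := image_inter hf ▸ image_inter hg ▸ congrArg₂ (· ∩ ·) hab hac
  simpa [hinter] using this

section Closure

variable {Ω : Type*}

def agreeSubgroup (m : ℕ) (G : Subgroup (Perm Ω)) : Subgroup (Perm Ω) where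
  carrier := {g | ∀ α : Fin m → Ω, ∃ g' ∈ G, ∀ i, g' (α i) = g (α i)}
  one_mem' _ := ⟨1, G.one_mem, fun _ => rfl⟩
  mul_mem' {a b} ha hb α := by
    obtain ⟨b', hb', hbα⟩ := hb α
    obtain ⟨a', ha', haα⟩ := ha (fun i => b (α i))
    exact ⟨a' * b', G.mul_mem ha' hb', fun i => by simp [Perm.mul_apply, hbα, haα]⟩
  inv_mem' {a} ha α := by
    obtain ⟨a', ha', haα⟩ := ha (fun i => a⁻¹ (α i))
    refine ⟨a'⁻¹, G.inv_mem ha', fun i => ?_⟩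
    rw [Perm.inv_eq_iff_eq, haα]
    simp

theorem sameOrbits_agreeSubgroup (m : ℕ) (G : Subgroup (Perm Ω)) :
    SameOrbits m G (agreeSubgroup m G) := by
  refine fun α β => ⟨fun ⟨g, hg, h⟩ => ⟨g, fun α => ⟨g, hg, fun _ => rfl⟩, h⟩, ?_⟩
  rintro ⟨g, hg, h⟩
  obtain ⟨g', hg', hgα⟩ := hg α
  exact ⟨g', hg', fun i => (hgα i).trans (h i)⟩

theorem mClosure_eq_agreeSubgroup (m : ℕ) (G : Subgroup (Perm Ω)) :
    mClosure m G = agreeSubgroup m G := by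
  refine le_antisymm (sSup_le fun H (hH : SameOrbits m G H) h hh α => ?_)
    (le_sSup (sameOrbits_agreeSubgroup m G))
  exact (hH α fun i => h (α i)).2 ⟨h, hh, fun _ => rfl⟩

theorem mem_mClosure_iff {m : ℕ} {G : Subgroup (Perm Ω)} {g : Perm Ω} :
    g ∈ mClosure m G ↔ ∀ α : Fin m → Ω, ∃ g' ∈ G, ∀ i, g' (α i) = g (α i) := by
  rw [mClosure_eq_agreeSubgroup]
  rfl

variable {G : Subgroup (Perm Ω)} {g : Perm Ω}

theorem exists_eq_three_of_mem_mClosure (hg : g ∈ mClosure 3 G) (a b c : Ω) :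
    ∃ g' ∈ G, g' a = g a ∧ g' b = g b ∧ g' c = g c := by
  obtain ⟨g', hg', h⟩ := mem_mClosure_iff.1 hg ![a, b, c]
  exact ⟨g', hg', h 0, h 1, h 2⟩

theorem mem_mClosure_three_of
    (h₂ : ∀ a b, ∃ g' ∈ G, g' a = g a ∧ g' b = g b)
    (h₃ : ∀ a b c, a ≠ b → a ≠ c → b ≠ c → ∃ g' ∈ G, g' a = g a ∧ g' b = g b ∧ g' c = g c) :
    g ∈ mClosure 3 G := by
  refine mem_mClosure_iff.2 fun α => ?_
  by_cases hd : α 0 ≠ α 1 ∧ α 0 ≠ α 2 ∧ α 1 ≠ α 2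
  · obtain ⟨g', hg', h0, h1, h2⟩ := h₃ (α 0) (α 1) (α 2) hd.1 hd.2.1 hd.2.2
    exact ⟨g', hg', fun i => by fin_cases i <;> assumption⟩
  obtain ⟨a, b, hα⟩ : ∃ a b, ∀ i, α i = a ∨ α i = b := by
    by_cases h01 : α 0 = α 1
    · exact ⟨α 0, α 2, fun i => by fin_cases i <;> simp [h01]⟩
    · exact ⟨α 0, α 1, fun i => by fin_cases i <;> simp; tauto⟩
  obtain ⟨g', hg', ha, hb⟩ := h₂ a b
  exact ⟨g', hg', fun i => by rcases hα i with h | h <;> rw [h] <;> assumption⟩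

end Closure

section Wreath

variable {Γ Δ : Type*}

def wreathMap (k : Δ → Perm Γ) (l : Perm Δ) (x : Δ → Γ) : Δ → Γ :=
  fun δ => k δ (x (l⁻¹ δ))

@[simp]
theorem wreathMap_apply_apply (k : Δ → Perm Γ) (l : Perm Δ) (x : Δ → Γ) (δ : Δ) :
    wreathMap k l x (l δ) = k (l δ) (x δ) := by
  simp [wreathMap]

def diffSet (x y : Δ → Γ) : Set Δ :=
  {δ | x δ ≠ y δ}

theorem diffSet_comm (x y : Δ → Γ) : diffSet x y = diffSet y x := by
  ext δ
  exact ne_comm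

theorem diffSet_wreathMap (k : Δ → Perm Γ) (l : Perm Δ) (x y : Δ → Γ) :
    diffSet (wreathMap k l x) (wreathMap k l y) = l '' diffSet x y := by
  ext ε
  obtain ⟨δ, rfl⟩ := l.surjective ε
  simp [diffSet]

section Update

variable [DecidableEq Δ]

theorem diffSet_update_update (x : Δ → Γ) (δ : Δ) {a b : Γ} (h : a ≠ b) :
    diffSet (update x δ a) (update x δ b) = {δ} := by
  ext ε
  by_cases hε : ε = δ <;> simp [diffSet, hε, h]

theorem diffSet_self_update (x : Δ → Γ) {δ : Δ} {a : Γ} (h : a ≠ x δ) :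
    diffSet x (update x δ a) = {δ} := by
  simpa using diffSet_update_update x δ h.symm

theorem diffSet_update_update_of_ne (x : Δ → Γ) {δ ε : Δ} (hδε : δ ≠ ε) {a b : Γ}
    (ha : a ≠ x δ) (hb : b ≠ x ε) :
    diffSet (update x δ a) (update x ε b) = {δ, ε} := by
  ext η
  by_cases hδ : η = δ
  · subst hδ; simp [diffSet, hδε, ha]
  by_cases hε : η = ε
  · subst hε; simp [diffSet, hδε.symm, hb.symm]
  · simp [diffSet, hδ, hε]

end Update

section Agreement

variable {k k₁ k₂ : Δ → Perm Γ} {l l₁ l₂ : Perm Δ} {F : (Δ → Γ) → Δ → Γ} {x y : Δ → Γ}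

theorem diffSet_eq_image_of_wreathMap_eq (hx : wreathMap k l x = F x)
    (hy : wreathMap k l y = F y) : diffSet (F x) (F y) = l '' diffSet x y := by
  rw [← hx, ← hy, diffSet_wreathMap]

theorem image_diffSet_eq_of_wreathMap_eq (hx : wreathMap k₁ l₁ x = wreathMap k₂ l₂ x)
    (hy : wreathMap k₁ l₁ y = wreathMap k₂ l₂ y) : l₁ '' diffSet x y = l₂ '' diffSet x y := by
  rw [← diffSet_wreathMap, hx, hy, diffSet_wreathMap]

theorem apply_eq_of_diffSet_eq_singleton (hx : wreathMap k₁ l₁ x = wreathMap k₂ l₂ x)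
    (hy : wreathMap k₁ l₁ y = wreathMap k₂ l₂ y) {δ : Δ} (h : diffSet x y = {δ}) :
    l₁ δ = l₂ δ := by
  simpa [h] using image_diffSet_eq_of_wreathMap_eq hx hy

theorem coord_apply_eq_of_wreathMap_eq (hx : wreathMap k₁ l₁ x = wreathMap k₂ l₂ x) {δ : Δ}
    (hl : l₁ δ = l₂ δ) : k₁ (l₂ δ) (x δ) = k₂ (l₂ δ) (x δ) := by
  have := congrFun hx (l₁ δ)
  rwa [wreathMap_apply_apply, hl, wreathMap_apply_apply] at this

end Agreement

def AgreesOnTriples (K : Subgroup (Perm Γ)) (L : Subgroup (Perm Δ)) (F : (Δ → Γ) → Δ → Γ) :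
    Prop :=
  ∀ x y z, ∃ k l, (∀ δ, k δ ∈ K) ∧ l ∈ L ∧
    wreathMap k l x = F x ∧ wreathMap k l y = F y ∧ wreathMap k l z = F z

section CoordinateForm

variable [DecidableEq Δ] {K : Subgroup (Perm Γ)} {L : Subgroup (Perm Δ)}
  {F : (Δ → Γ) → Δ → Γ}

theorem diffSet_line_eq (hF : AgreesOnTriples K L F) (x : Δ → Γ) (δ : Δ) {a b c : Γ}
    (hab : a ≠ b) (hac : a ≠ c) :
    diffSet (F (update x δ a)) (F (update x δ b)) =
      diffSet (F (update x δ a)) (F (update x δ c)) := by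
  obtain ⟨k, l, -, -, ha, hb, hc⟩ := hF (update x δ a) (update x δ b) (update x δ c)
  rw [diffSet_eq_image_of_wreathMap_eq ha hb, diffSet_eq_image_of_wreathMap_eq ha hc,
    diffSet_update_update x δ hab, diffSet_update_update x δ hac]

theorem exists_line_direction [Nontrivial Γ] (hF : AgreesOnTriples K L F) (x : Δ → Γ)
    (δ : Δ) : ∃ ε, ∀ a b, a ≠ b → diffSet (F (update x δ a)) (F (update x δ b)) = {ε} := by
  obtain ⟨a₀, b₀, h₀⟩ := exists_pair_ne Γ
  obtain ⟨k, l, -, -, ha₀, hb₀, -⟩ := hF (update x δ a₀) (update x δ b₀) (update x δ b₀)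
  refine ⟨l δ, fun a b hab => ?_⟩
  have hbase : diffSet (F (update x δ a₀)) (F (update x δ b₀)) = {l δ} := by
    rw [diffSet_eq_image_of_wreathMap_eq ha₀ hb₀, diffSet_update_update x δ h₀, image_singleton]
  rw [← hbase]
  by_cases ha : a = a₀
  · subst ha
    exact diffSet_line_eq hF x δ hab h₀
  · rw [diffSet_line_eq hF x δ hab ha, diffSet_comm,
      diffSet_line_eq hF x δ (Ne.symm ha) h₀]

theorem exists_coordinate_form [Nontrivial Γ] (hF : AgreesOnTriples K L F) :
    ∃ (φ : Δ → Δ) (κ : Δ → Γ → Γ), (∀ δ, Injective (κ δ)) ∧ ∀ x δ, F x (φ δ) = κ δ (x δ) := by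
  obtain ⟨x₀⟩ : Nonempty (Δ → Γ) := inferInstance
  choose φ hφ using exists_line_direction hF x₀
  refine ⟨φ, fun δ a => F (update x₀ δ a) (φ δ), fun δ a b hab => ?_, fun x δ => ?_⟩
  · by_contra hne
    have hmem : φ δ ∈ diffSet (F (update x₀ δ a)) (F (update x₀ δ b)) := by
      rw [hφ δ a b hne]; rfl
    exact hmem hab
  · obtain ⟨c, hc⟩ := exists_ne (x δ)
    obtain ⟨k, l, -, -, hcF, hxδF, hxF⟩ := hF (update x₀ δ c) (update x₀ δ (x δ)) x
    have hl : l δ = φ δ := by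
      have := diffSet_eq_image_of_wreathMap_eq hcF hxδF
      rwa [hφ δ c (x δ) hc, diffSet_update_update x₀ δ hc, image_singleton,
        singleton_eq_singleton_iff, eq_comm] at this
    calc F x (φ δ) = wreathMap k l x (l δ) := by rw [hxF, hl]
      _ = wreathMap k l (update x₀ δ (x δ)) (l δ) := by simp
      _ = F (update x₀ δ (x δ)) (φ δ) := by rw [hxδF, hl]

end CoordinateForm

section WreathForm

variable {F : (Δ → Γ) → Δ → Γ} {φ : Δ → Δ} {κ : Δ → Γ → Γ}

theorem injective_of_coordinate_form [Nontrivial Γ] (hκ : ∀ δ, Injective (κ δ))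
    (hF : ∀ x δ, F x (φ δ) = κ δ (x δ)) : Injective φ := by
  classical
  intro δ δ' hφ
  by_contra hne
  obtain ⟨a, b, hab⟩ := exists_pair_ne Γ
  refine hab (hκ δ ?_)
  calc κ δ a = F (fun _ => a) (φ δ') := by rw [← hφ, hF]
    _ = κ δ' (update (fun _ => a) δ b δ') := by rw [hF, update_of_ne (Ne.symm hne)]
    _ = F (update (fun _ => a) δ b) (φ δ) := by rw [hφ, hF]
    _ = κ δ b := by rw [hF, update_self]

theorem exists_wreathMap_eq_of_coordinate_form [Finite Γ] [Finite Δ] [Nontrivial Γ]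
    (hκ : ∀ δ, Injective (κ δ)) (hF : ∀ x δ, F x (φ δ) = κ δ (x δ)) :
    ∃ k l, F = wreathMap k l := by
  let l : Perm Δ :=
    Equiv.ofBijective φ (Finite.injective_iff_bijective.1 (injective_of_coordinate_form hκ hF))
  refine ⟨fun ε => Equiv.ofBijective (κ (l⁻¹ ε)) (Finite.injective_iff_bijective.1 (hκ _)), l, ?_⟩
  funext x ε
  obtain ⟨δ, rfl⟩ := l.surjective ε
  simp [wreathMap, l, hF]

end WreathForm

namespace AgreesOnTriples

variable {K : Subgroup (Perm Γ)} {L : Subgroup (Perm Δ)} {k : Δ → Perm Γ} {l : Perm Δ}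

theorem coord_mem_mClosure [Nontrivial Γ] (h : AgreesOnTriples K L (wreathMap k l)) (ε : Δ) :
    k ε ∈ mClosure 3 K := by
  classical
  obtain ⟨x₀⟩ : Nonempty (Δ → Γ) := inferInstance
  obtain ⟨δ, rfl⟩ := l.surjective ε
  have key : ∀ a b c, a ≠ b →
      ∃ g ∈ K, g a = k (l δ) a ∧ g b = k (l δ) b ∧ g c = k (l δ) c := by
    intro a b c hab
    obtain ⟨k', l', hk', -, ha, hb, hc⟩ := h (update x₀ δ a) (update x₀ δ b) (update x₀ δ c)
    have hl := apply_eq_of_diffSet_eq_singleton ha hb (diffSet_update_update x₀ δ hab)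
    refine ⟨k' (l δ), hk' _, ?_, ?_, ?_⟩
    · simpa using coord_apply_eq_of_wreathMap_eq ha hl
    · simpa using coord_apply_eq_of_wreathMap_eq hb hl
    · simpa using coord_apply_eq_of_wreathMap_eq hc hl
  refine mem_mClosure_three_of (fun a b => ?_) fun a b c hab _ _ => key a b c hab
  obtain ⟨c, hc⟩ := exists_ne a
  obtain ⟨g, hg, ha, -, hb⟩ := key a c b hc.symm
  exact ⟨g, hg, ha, hb⟩

theorem top_mem_mClosure [Nontrivial Γ] (h : AgreesOnTriples K L (wreathMap k l)) :
    l ∈ mClosure 3 L := by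
  classical
  obtain ⟨γ, γ', hγ⟩ := exists_pair_ne Γ
  let x₀ : Δ → Γ := fun _ => γ
  have hne : ∀ δ, γ' ≠ x₀ δ := fun _ => hγ.symm
  refine mem_mClosure_three_of (fun a b => ?_) fun a b c hab hac hbc => ?_
  · obtain ⟨k', l', -, hl', h₀, ha, hb⟩ := h x₀ (update x₀ a γ') (update x₀ b γ')
    exact ⟨l', hl', apply_eq_of_diffSet_eq_singleton h₀ ha (diffSet_self_update x₀ (hne a)),
      apply_eq_of_diffSet_eq_singleton h₀ hb (diffSet_self_update x₀ (hne b))⟩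
  · obtain ⟨k', l', -, hl', ha, hb, hc⟩ :=
      h (update x₀ a γ') (update x₀ b γ') (update x₀ c γ')
    have hpair : ∀ {s t}, s ≠ t →
        wreathMap k' l' (update x₀ s γ') = wreathMap k l (update x₀ s γ') →
        wreathMap k' l' (update x₀ t γ') = wreathMap k l (update x₀ t γ') →
        l' '' {s, t} = l '' {s, t} := by
      intro s t hst hs ht
      rw [← diffSet_update_update_of_ne x₀ hst (hne s) (hne t)]
      exact image_diffSet_eq_of_wreathMap_eq hs ht
    have hinj := l'.injective
    have hinj' := l.injective
    exact ⟨l', hl',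
      apply_eq_of_image_pair_eq hinj hinj' (hpair hab ha hb) (hpair hac ha hc) hbc,
      apply_eq_of_image_pair_eq hinj hinj' (hpair hab.symm hb ha) (hpair hbc hb hc) hac,
      apply_eq_of_image_pair_eq hinj hinj' (hpair hac.symm hc ha) (hpair hbc.symm hc hb) hab⟩

end AgreesOnTriples

end Wreath

theorem stmt15_general {Γ Δ : Type*} [Fintype Γ] [Fintype Δ]
    (K : Subgroup (Equiv.Perm Γ)) (L : Subgroup (Equiv.Perm Δ))
    -- `K` is nonregular:
    (hKnonreg : ∃ g ∈ K, g ≠ 1 ∧ ∃ γ : Γ, g γ = γ)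
    (W W' : Subgroup (Equiv.Perm (Δ → Γ)))
    (hW : ∀ f : Equiv.Perm (Δ → Γ), f ∈ W ↔
      ∃ (k : Δ → Equiv.Perm Γ) (l : Equiv.Perm Δ),
        (∀ δ, k δ ∈ K) ∧ l ∈ L ∧
          ∀ (x : Δ → Γ) (δ : Δ), f x δ = k δ (x (l⁻¹ δ)))
    (hW' : ∀ f : Equiv.Perm (Δ → Γ), f ∈ W' ↔
      ∃ (k : Δ → Equiv.Perm Γ) (l : Equiv.Perm Δ),
        (∀ δ, k δ ∈ mClosure 3 K) ∧ l ∈ mClosure 3 L ∧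
          ∀ (x : Δ → Γ) (δ : Δ), f x δ = k δ (x (l⁻¹ δ))) :
    mClosure 3 W ≤ W' := by
  classical
  obtain ⟨g, -, hg, -⟩ := hKnonreg
  have : Nontrivial Γ := not_subsingleton_iff_nontrivial.1 fun _ => hg (Subsingleton.elim g 1)
  intro f hf
  have hagree : AgreesOnTriples K L f := by
    intro x y z
    obtain ⟨w, hw, hx, hy, hz⟩ := exists_eq_three_of_mem_mClosure hf x y z
    obtain ⟨k, l, hk, hl, hwkl⟩ := (hW w).1 hw
    have hw_eq : ⇑w = wreathMap k l := funext fun x => funext (hwkl x)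
    exact ⟨k, l, hk, hl, hw_eq ▸ hx, hw_eq ▸ hy, hw_eq ▸ hz⟩
  obtain ⟨φ, κ, hκ, hform⟩ := exists_coordinate_form hagree
  obtain ⟨k, l, hfkl⟩ := exists_wreathMap_eq_of_coordinate_form hκ hform
  rw [hfkl] at hagree
  exact (hW' f).2 ⟨k, l, hagree.coord_mem_mClosure, hagree.top_mem_mClosure,
    fun x δ => congrFun (congrFun hfkl x) δ⟩

/-- If the wreath product `K ↑ L` in product action on `Γ^Δ` is primitive
(equivalently, `K` is primitive and nonregular and `L` is transitive and
nontrivial), then `(K ↑ L)^(3) ≤ K^(3) ↑ L^(3)`. Here `W` is `K ↑ L` and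
`W'` is `K^(3) ↑ L^(3)`, both in product action on `Γ^Δ`. -/
theorem stmt15 {Γ Δ : Type*} [Fintype Γ] [Fintype Δ]
    (K : Subgroup (Equiv.Perm Γ)) (L : Subgroup (Equiv.Perm Δ))
    -- `K` is primitive:
    (hKtrans : ∀ x y : Γ, ∃ g ∈ K, g x = y)
    (hKprim : ∀ B : Set Γ, (∀ g ∈ K, g '' B = B ∨ Disjoint (g '' B) B) →
      B.Subsingleton ∨ B = Set.univ)
    -- `K` is nonregular:
    (hKnonreg : ∃ g ∈ K, g ≠ 1 ∧ ∃ γ : Γ, g γ = γ)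
    -- `L` is transitive and nontrivial:
    (hLtrans : ∀ x y : Δ, ∃ l ∈ L, l x = y)
    (hLnontriv : L ≠ ⊥)
    (W W' : Subgroup (Equiv.Perm (Δ → Γ)))
    (hW : ∀ f : Equiv.Perm (Δ → Γ), f ∈ W ↔
      ∃ (k : Δ → Equiv.Perm Γ) (l : Equiv.Perm Δ),
        (∀ δ, k δ ∈ K) ∧ l ∈ L ∧
          ∀ (x : Δ → Γ) (δ : Δ), f x δ = k δ (x (l⁻¹ δ)))
    (hW' : ∀ f : Equiv.Perm (Δ → Γ), f ∈ W' ↔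
      ∃ (k : Δ → Equiv.Perm Γ) (l : Equiv.Perm Δ),
        (∀ δ, k δ ∈ mClosure 3 K) ∧ l ∈ mClosure 3 L ∧
          ∀ (x : Δ → Γ) (δ : Δ), f x δ = k δ (x (l⁻¹ δ))) :
    mClosure 3 W ≤ W' :=
  stmt15_general K L hKnonreg W W' hW hW'
end
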